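/- arXiv:1210.5630 — 3 statements merged into one kernel-verified Lean document; each statement's English description precedes it below -/
import Mathlib

section
/- Let e be a projection in the Cuntz algebra O_d commuting with ρ(T) for all T (e.g., e ∈ span{S_i S_j*}), with e ≠ 0 and e ≠ 1. Define Q_1 = e·ρ(1−e) and inductively Q_{N+1} = e·ρ(Q_N). Then each Q_N is a nonzero projection satisfying Q_N · ρ^N(e) = 0 and Q_N · ρ^n(Q_N) = 0 for all 0 < n ≤ N. -/
/-- The canonical endomorphism `ρ(T) = Σⱼ Sⱼ T Sⱼ*` of the Cuntz algebra. -/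
def cuntzRho {A : Type} [Ring A] [StarRing A] {d : ℕ} (S : Fin d → A) (T : A) : A :=
  ∑ j, S j * T * star (S j)

/-- The cutting projections: `cuntzQ S e 0 = Q₁ = e·ρ(1−e)` and
`cuntzQ S e n = Q_{n+1}`, with `Q_{N+1} = e·ρ(Q_N)`. -/
def cuntzQ {A : Type} [Ring A] [StarRing A] {d : ℕ} (S : Fin d → A) (e : A) :
    ℕ → A
  | 0 => e * cuntzRho S (1 - e)
  | n + 1 => e * cuntzRho S (cuntzQ S e n)

/-!
Because the `S i` are isometries with orthogonal ranges, `ρ` is a multiplicative `*`-map with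
`ρ(T) S i = S i T`. As `e` commutes with the range of `ρ`, `e ρ(P)` is a projection whenever `P`
is, so every `Q_N` is a projection. By induction `Q_N ρ^N(e) = 0` and `ρ^j(e) Q_N = Q_N` for
`j < N`; hence `ρ^n(Q_N) = ρ^n(ρ^(N-n)(e) Q_N)` lies under `ρ^N(e)` and is annihilated by `Q_N`.

For `Q_N ≠ 0` write `e = Σ c_ij S_i S_j*`. The map `c ↦ Σ c_ij S_i S_j*` is an injective
multiplicative map on `M_d(ℂ)`, so `c` is a nonzero idempotent and its trace `t` (its rank) is
nonzero. Since `Σ_j S_j* e ρ(T) S_j = t T`, `e ρ(T) = 0` forces `T = 0`, and induction on `N`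
starting from `1 - e ≠ 0` finishes the proof.
-/

theorem Matrix.trace_ne_zero_of_isIdempotentElem {n K : Type*} [Fintype n] [DecidableEq n]
    [Field K] [CharZero K] {c : Matrix n n K} (hc : IsIdempotentElem c) (hc0 : c ≠ 0) :
    c.trace ≠ 0 := by
  rw [← Matrix.trace_toLin'_eq]
  refine fun h => hc0 (Matrix.toLinAlgEquiv'.injective ?_)
  rw [map_zero]
  exact LinearMap.IsIdempotentElem.eq_zero_of_trace_eq_zero (hc.map Matrix.toLinAlgEquiv') h

section Endomorphism

variable {A : Type} [Ring A] [StarRing A] {d : ℕ} {S : Fin d → A}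

theorem cuntzRho_zero : cuntzRho S (0 : A) = 0 := by
  simp [cuntzRho]

theorem cuntzRho_star (T : A) : cuntzRho S (star T) = star (cuntzRho S T) := by
  simp [cuntzRho, star_sum, mul_assoc]

section Isometries

variable (hS : ∀ i j, star (S i) * S j = if i = j then (1 : A) else 0)
include hS

theorem cuntzRho_mul_S (T : A) (i : Fin d) : cuntzRho S T * S i = S i * T := by
  simp [cuntzRho, Finset.sum_mul, mul_assoc, hS]

theorem cuntzRho_mul (T U : A) : cuntzRho S (T * U) = cuntzRho S T * cuntzRho S U := by
  change ∑ j, S j * (T * U) * star (S j) = cuntzRho S T * ∑ j, S j * U * star (S j)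
  rw [Finset.mul_sum]
  refine Finset.sum_congr rfl fun j _ => ?_
  simp only [← mul_assoc, cuntzRho_mul_S hS]

theorem iterate_cuntzRho_mul (n : ℕ) (T U : A) :
    (cuntzRho S)^[n] (T * U) = (cuntzRho S)^[n] T * (cuntzRho S)^[n] U := by
  induction n with
  | zero => rfl
  | succ n ih => simp only [Function.iterate_succ_apply', ih, cuntzRho_mul hS]

theorem sum_star_mul_mul_cuntzRho_mul (x T : A) :
    ∑ j, star (S j) * (x * cuntzRho S T) * S j = (∑ j, star (S j) * x * S j) * T := by
  simp only [mul_assoc, cuntzRho_mul_S hS, Finset.sum_mul]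

theorem IsStarProjection.cuntzRho {P : A} (hP : IsStarProjection P) :
    IsStarProjection (cuntzRho S P) where
  isIdempotentElem := by
    rw [IsIdempotentElem, ← cuntzRho_mul hS, hP.isIdempotentElem.eq]
  isSelfAdjoint := by
    rw [IsSelfAdjoint, ← cuntzRho_star, hP.isSelfAdjoint.star_eq]

variable {e : A}

theorem cuntzQ_mul_iterate_cuntzRho (he : IsIdempotentElem e) (n : ℕ) :
    cuntzQ S e n * (cuntzRho S)^[n + 1] e = 0 := by
  induction n with
  | zero =>
    rw [cuntzQ, Function.iterate_one, mul_assoc, ← cuntzRho_mul hS, he.one_sub_mul_self,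
      cuntzRho_zero, mul_zero]
  | succ n ih =>
    rw [cuntzQ, Function.iterate_succ_apply', mul_assoc, ← cuntzRho_mul hS, ih, cuntzRho_zero,
      mul_zero]

variable (hcomm : ∀ T : A, e * cuntzRho S T = cuntzRho S T * e)
include hcomm

theorem isStarProjection_cuntzQ (he : IsStarProjection e) (n : ℕ) :
    IsStarProjection (cuntzQ S e n) := by
  induction n with
  | zero => exact he.mul (he.one_sub.cuntzRho hS) (hcomm _)
  | succ n ih => exact he.mul (ih.cuntzRho hS) (hcomm _)

theorem iterate_cuntzRho_mul_cuntzQ (he : IsIdempotentElem e) {j n : ℕ} (hj : j ≤ n) :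
    (cuntzRho S)^[j] e * cuntzQ S e n = cuntzQ S e n := by
  induction j generalizing n with
  | zero => cases n <;> rw [Function.iterate_zero_apply, cuntzQ, ← mul_assoc, he.eq]
  | succ j ih =>
    obtain ⟨n, rfl⟩ : ∃ m, n = m + 1 := ⟨n - 1, by omega⟩
    rw [cuntzQ, Function.iterate_succ_apply', ← mul_assoc, ← hcomm, mul_assoc,
      ← cuntzRho_mul hS, ih (by omega)]

theorem cuntzQ_mul_iterate_cuntzRho_cuntzQ (he : IsIdempotentElem e) {k n : ℕ} (hk : 0 < k)
    (hkn : k ≤ n + 1) : cuntzQ S e n * (cuntzRho S)^[k] (cuntzQ S e n) = 0 := by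
  have habsorb : (cuntzRho S)^[k] (cuntzQ S e n)
      = (cuntzRho S)^[n + 1] e * (cuntzRho S)^[k] (cuntzQ S e n) := by
    conv_lhs => rw [← iterate_cuntzRho_mul_cuntzQ hS hcomm he (j := n + 1 - k) (by omega)]
    rw [iterate_cuntzRho_mul hS, ← Function.iterate_add_apply, Nat.add_sub_of_le hkn]
  rw [habsorb, ← mul_assoc, cuntzQ_mul_iterate_cuntzRho hS he, zero_mul]

end Isometries

end Endomorphism

section MatrixUnits

variable {A : Type} [Ring A] [StarRing A] [Algebra ℂ A] {d : ℕ}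

variable (S : Fin d → A) in
def cuntzMatrix : Matrix (Fin d) (Fin d) ℂ →ₗ[ℂ] A where
  toFun c := ∑ i, ∑ j, c i j • (S i * star (S j))
  map_add' b c := by simp only [Matrix.add_apply, add_smul, Finset.sum_add_distrib]
  map_smul' a c := by simp only [Matrix.smul_apply, smul_eq_mul, mul_smul, Finset.smul_sum,
    RingHom.id_apply]

variable {S : Fin d → A}

theorem cuntzMatrix_apply (c : Matrix (Fin d) (Fin d) ℂ) :
    cuntzMatrix S c = ∑ i, ∑ j, c i j • (S i * star (S j)) := rfl

theorem span_le_range_cuntzMatrix :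
    Submodule.span ℂ {x : A | ∃ i j, x = S i * star (S j)} ≤ LinearMap.range (cuntzMatrix S) := by
  rw [Submodule.span_le]
  rintro _ ⟨i, j, rfl⟩
  exact ⟨Matrix.single i j 1, by simp [cuntzMatrix_apply, Matrix.single_apply, ite_smul, ite_and]⟩

variable (hS : ∀ i j, star (S i) * S j = if i = j then (1 : A) else 0)
include hS

theorem star_mul_cuntzMatrix_mul (c : Matrix (Fin d) (Fin d) ℂ) (k l : Fin d) :
    star (S k) * cuntzMatrix S c * S l = c k l • 1 := by
  simp [cuntzMatrix_apply, Finset.mul_sum, Finset.sum_mul, mul_assoc, hS]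

theorem cuntzMatrix_mul (b c : Matrix (Fin d) (Fin d) ℂ) :
    cuntzMatrix S (b * c) = cuntzMatrix S b * cuntzMatrix S c := by
  have hunits (i j k l : Fin d) :
      S i * star (S j) * (S k * star (S l)) = if j = k then S i * star (S l) else 0 := by
    rw [mul_assoc, ← mul_assoc (star _), hS]
    split_ifs <;> simp
  simp only [cuntzMatrix_apply, Matrix.mul_apply, Finset.mul_sum, Finset.sum_mul,
    smul_mul_smul_comm, hunits, smul_ite, smul_zero, Finset.sum_ite_eq', Finset.mem_univ, if_true,
    Finset.sum_smul]
  conv_rhs => rw [Finset.sum_comm]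
  conv_lhs => rw [Finset.sum_comm]
  refine Finset.sum_congr rfl fun l _ => Finset.sum_comm

theorem cuntzMatrix_injective [Nontrivial A] : Function.Injective (cuntzMatrix S) := by
  intro b c hbc
  ext k l
  apply (algebraMap ℂ A).injective
  simp only [Algebra.algebraMap_eq_smul_one, ← star_mul_cuntzMatrix_mul hS, hbc]

theorem sum_star_mul_cuntzMatrix_mul (c : Matrix (Fin d) (Fin d) ℂ) :
    ∑ j, star (S j) * cuntzMatrix S c * S j = c.trace • 1 := by
  simp only [star_mul_cuntzMatrix_mul hS, Matrix.trace, Matrix.diag, Finset.sum_smul]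

theorem cuntzMatrix_mul_cuntzRho_ne_zero {c : Matrix (Fin d) (Fin d) ℂ} (hc : c.trace ≠ 0)
    {T : A} (hT : T ≠ 0) : cuntzMatrix S c * cuntzRho S T ≠ 0 := by
  intro h
  have := sum_star_mul_mul_cuntzRho_mul hS (cuntzMatrix S c) T
  rw [h, sum_star_mul_cuntzMatrix_mul hS] at this
  simp only [mul_zero, zero_mul, Finset.sum_const_zero, smul_mul_assoc, one_mul] at this
  exact hT ((smul_eq_zero_iff_right hc).mp this.symm)

theorem cuntzQ_ne_zero [Nontrivial A] {e : A} (he : IsIdempotentElem e) (he0 : e ≠ 0)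
    (he1 : e ≠ 1) (hespan : e ∈ Submodule.span ℂ {x : A | ∃ i j, x = S i * star (S j)})
    (n : ℕ) : cuntzQ S e n ≠ 0 := by
  obtain ⟨c, rfl⟩ := span_le_range_cuntzMatrix hespan
  have hc : IsIdempotentElem c := cuntzMatrix_injective hS (by rw [cuntzMatrix_mul hS, he.eq])
  have hc0 : c ≠ 0 := by
    rintro rfl
    exact he0 (map_zero _)
  have htrace := Matrix.trace_ne_zero_of_isIdempotentElem hc hc0
  induction n with
  | zero => exact cuntzMatrix_mul_cuntzRho_ne_zero hS htrace (sub_ne_zero.mpr he1.symm)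
  | succ n ih => exact cuntzMatrix_mul_cuntzRho_ne_zero hS htrace ih

end MatrixUnits

theorem stmt4_general {A : Type} [Ring A] [StarRing A] [Algebra ℂ A] [Nontrivial A] {d : ℕ}
    (S : Fin d → A)
    (horth : ∀ i j, star (S i) * S j = if i = j then (1 : A) else 0)
    (e : A) (heproj : e * e = e) (hestar : star e = e) (he0 : e ≠ 0) (he1 : e ≠ 1)
    (hespan : e ∈ Submodule.span ℂ {x : A | ∃ i j, x = S i * star (S j)})
    (hcomm : ∀ T : A, e * cuntzRho S T = cuntzRho S T * e)
    (N : ℕ) (hN : 1 ≤ N) :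
    (cuntzQ S e (N - 1)) * (cuntzQ S e (N - 1)) = cuntzQ S e (N - 1) ∧
    star (cuntzQ S e (N - 1)) = cuntzQ S e (N - 1) ∧
    cuntzQ S e (N - 1) ≠ 0 ∧
    (cuntzQ S e (N - 1)) * (cuntzRho S)^[N] e = 0 ∧
    ∀ n, 0 < n → n ≤ N → (cuntzQ S e (N - 1)) * (cuntzRho S)^[n] (cuntzQ S e (N - 1)) = 0 := by
  obtain ⟨N, rfl⟩ : ∃ M, N = M + 1 := ⟨N - 1, by omega⟩
  rw [Nat.add_sub_cancel]
  have hQ := isStarProjection_cuntzQ horth hcomm ⟨heproj, hestar⟩ N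
  exact ⟨hQ.isIdempotentElem, hQ.isSelfAdjoint, cuntzQ_ne_zero horth heproj he0 he1 hespan N,
    cuntzQ_mul_iterate_cuntzRho horth heproj N,
    fun _ hk hkN => cuntzQ_mul_iterate_cuntzRho_cuntzQ horth hcomm heproj hk hkN⟩

/-- Let `e` be a projection in the Cuntz algebra `O_d` commuting with
`ρ(T)` for all `T` (e.g. `e ∈ span{Sᵢ Sⱼ*}`), with `e ≠ 0` and `e ≠ 1`. Define
`Q₁ = e·ρ(1−e)` and inductively `Q_{N+1} = e·ρ(Q_N)`. Then each `Q_N` is a nonzero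
projection with `Q_N · ρ^N(e) = 0` and `Q_N · ρ^n(Q_N) = 0` for `0 < n ≤ N`. -/
theorem stmt4 {A : Type} [Ring A] [StarRing A] [Algebra ℂ A] [Nontrivial A] {d : ℕ}
    (S : Fin d → A)
    (horth : ∀ i j, star (S i) * S j = if i = j then (1 : A) else 0)
    (hsum : ∑ j, S j * star (S j) = 1)
    (e : A) (heproj : e * e = e) (hestar : star e = e) (he0 : e ≠ 0) (he1 : e ≠ 1)
    (hespan : e ∈ Submodule.span ℂ {x : A | ∃ i j, x = S i * star (S j)})
    (hcomm : ∀ T : A, e * cuntzRho S T = cuntzRho S T * e)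
    (N : ℕ) (hN : 1 ≤ N) :
    (cuntzQ S e (N - 1)) * (cuntzQ S e (N - 1)) = cuntzQ S e (N - 1) ∧
    star (cuntzQ S e (N - 1)) = cuntzQ S e (N - 1) ∧
    cuntzQ S e (N - 1) ≠ 0 ∧
    (cuntzQ S e (N - 1)) * (cuntzRho S)^[N] e = 0 ∧
    ∀ n, 0 < n → n ≤ N → (cuntzQ S e (N - 1)) * (cuntzRho S)^[n] (cuntzQ S e (N - 1)) = 0 :=
  stmt4_general S horth e heproj hestar he0 he1 hespan hcomm N hN
end

section
/- Let M be the ℤ-submodule of ℚ(T)-style fractions { P(T)/T^n : P ∈ ℤ[T], deg P ≤ n, n ∈ ℕ } inside the localization ℤ[T][1/T], and let φ : M → M be the map φ(P(T)/T^n) = P(T)/T^{n+1}. Then the cokernel of (id − φ) is isomorphic to ℤ, via the evaluation map Q(T)/T^n ↦ Q(1); moreover id − φ is injective. -/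
/-!
The shift `φ` is multiplication by `T⁻¹`, so `id − φ` is multiplication by `1 − T⁻¹`, which is
not a zero divisor in the domain `ℤ[T, T⁻¹]`; and evaluation at `T = 1` is a ring homomorphism
killing `1 − T⁻¹`. Conversely, if `P(1) = 0` then `P = (X − 1) Q`, and
`P / Tⁿ = (1 − T⁻¹) · (X Q / Tⁿ)` where `deg (X Q) ≤ deg P ≤ n`, so the preimage stays in `M`.
-/

open LaurentPolynomial

def fracM : Set (LaurentPolynomial ℤ) :=
  {f | ∃ (n : ℕ) (P : Polynomial ℤ), P.natDegree ≤ n ∧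
        f = T (-(n : ℤ)) * Polynomial.toLaurent P}

def evalOne (f : LaurentPolynomial ℤ) : ℤ := f.coeff.sum fun _ c => c

namespace LaurentPolynomial

theorem T_ne_one {R : Type*} [Semiring R] [Nontrivial R] {n : ℤ} (hn : n ≠ 0) :
    (T n : R[T;T⁻¹]) ≠ 1 := by
  intro h
  have hdeg := congrArg LaurentPolynomial.degree h
  rw [degree_T, ← T_zero, degree_T] at hdeg
  exact hn (by exact_mod_cast hdeg)

theorem eq_zero_of_sub_T_mul_self_eq_zero {R : Type*} [CommRing R] [IsDomain R] {n : ℤ}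
    (hn : n ≠ 0) {f : R[T;T⁻¹]} (h : f - T n * f = 0) : f = 0 := by
  have hmul : (1 - T n) * f = 0 := by rwa [sub_mul, one_mul]
  exact (mul_eq_zero.mp hmul).resolve_left (sub_ne_zero.mpr (T_ne_one hn).symm)

theorem T_mul_toLaurent_X_mul_sub_T_neg_one_mul_self {R : Type*} [CommRing R] (n : ℤ)
    (Q : Polynomial R) :
    T n * Polynomial.toLaurent (Polynomial.X * Q)
        - T (-1) * (T n * Polynomial.toLaurent (Polynomial.X * Q))
      = T n * Polynomial.toLaurent ((Polynomial.X - Polynomial.C 1) * Q) := by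
  have hT : (T (-1) * T 1 : R[T;T⁻¹]) = 1 := by rw [← T_add]; simp
  simp only [map_mul, map_sub, Polynomial.toLaurent_X, map_one]
  linear_combination (-(T n * Polynomial.toLaurent Q)) * hT

end LaurentPolynomial

theorem evalOne_eq_eval₂ (f : LaurentPolynomial ℤ) : evalOne f = eval₂ (RingHom.id ℤ) 1 f := by
  induction f using LaurentPolynomial.induction_on' with
  | add p q hp hq =>
    rw [map_add, ← hp, ← hq]
    exact Finsupp.sum_add_index (fun _ _ => rfl) (fun _ _ _ _ => rfl)
  | C_mul_T n r =>
    rw [← single_eq_C_mul_T, evalOne, AddMonoidAlgebra.coeff_single,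
      Finsupp.sum_single_index rfl, single_eq_C_mul_T]
    simp

theorem evalOne_sub_T_neg_one_mul_self (g : LaurentPolynomial ℤ) :
    evalOne (g - T (-1) * g) = 0 := by
  simp [evalOne_eq_eval₂]

theorem evalOne_T_mul_toLaurent (n : ℤ) (P : Polynomial ℤ) :
    evalOne (T n * Polynomial.toLaurent P) = P.eval 1 := by
  simp [evalOne_eq_eval₂]

theorem evalOne_C (m : ℤ) : evalOne (C m) = m := by
  simp [evalOne_eq_eval₂]

theorem C_mem_fracM (m : ℤ) : C m ∈ fracM :=
  ⟨0, Polynomial.C m, by simp, by simp⟩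

theorem exists_mem_fracM_sub_T_neg_one_mul_self_eq {f : LaurentPolynomial ℤ} (hf : f ∈ fracM)
    (hf1 : evalOne f = 0) : ∃ g ∈ fracM, g - T (-1) * g = f := by
  obtain ⟨n, P, hPn, rfl⟩ := hf
  rw [evalOne_T_mul_toLaurent] at hf1
  obtain ⟨Q, rfl⟩ := Polynomial.dvd_iff_isRoot.mpr hf1
  have hXQ : (Polynomial.X * Q).natDegree ≤ n := by
    rcases eq_or_ne Q 0 with rfl | hQ
    · simp
    · rwa [Polynomial.natDegree_mul Polynomial.X_ne_zero hQ, Polynomial.natDegree_X,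
        ← Polynomial.natDegree_X_sub_C (1 : ℤ),
        ← Polynomial.natDegree_mul (Polynomial.X_sub_C_ne_zero 1) hQ]
  exact ⟨_, ⟨n, _, hXQ, rfl⟩, T_mul_toLaurent_X_mul_sub_T_neg_one_mul_self _ Q⟩

/-- for the shift `φ(P(T)/Tⁿ) = P(T)/Tⁿ⁺¹` (i.e. multiplication by
`T⁻¹`) on `M`, the map `id − φ` is injective, its image consists exactly of the
elements of `M` vanishing at `T = 1`, and evaluation at `T = 1` is onto `ℤ`; thus
evaluation at `T = 1` induces an isomorphism `coker(id − φ) ≅ ℤ`. -/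
theorem stmt10 :
    (∀ f ∈ fracM, f - T (-1 : ℤ) * f = 0 → f = 0) ∧
    (∀ f ∈ fracM, (∃ g ∈ fracM, g - T (-1 : ℤ) * g = f) ↔ evalOne f = 0) ∧
    (∀ m : ℤ, ∃ f ∈ fracM, evalOne f = m) := by
  refine ⟨fun f _ hf => eq_zero_of_sub_T_mul_self_eq_zero (by norm_num) hf,
    fun f hf => ⟨?_, exists_mem_fracM_sub_T_neg_one_mul_self_eq hf⟩,
    fun m => ⟨C m, C_mem_fracM m, evalOne_C m⟩⟩
  rintro ⟨g, -, rfl⟩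
  exact evalOne_sub_T_neg_one_mul_self g
end

section
/- Let G be a finite (or compact) group and α a finite-dimensional representation. Define the relation on irreducible representations: t ∼ t' iff t and t' both occur in some common iterated tensor product of irreducibles. Then ∼ is an equivalence relation, and the tensor product descends to a well-defined group operation on the set of equivalence classes (the chain group), with identity the class of the trivial representation. -/
open CategoryTheory MonoidalCategory

/-- `t` occurs in `π`: there is a nonzero morphism of representations `t ⟶ π`. -/
def occursIn {G : Type} [Group G] (t π : FDRep ℂ G) : Prop :=
  ∃ f : t ⟶ π, f ≠ 0

/-- The iterated tensor product `τ₁ ⊗ ⋯ ⊗ τₙ` of a list of representations. -/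
noncomputable def tensorList {G : Type} [Group G] (l : List (FDRep ℂ G)) :
    FDRep ℂ G :=
  l.foldr (fun a b => a ⊗ b) (𝟙_ (FDRep ℂ G))

/-- The chain relation: `t ∼ t'` iff `t` and `t'` both occur in some common
iterated tensor product `τ₁ ⊗ ⋯ ⊗ τₙ` of irreducible representations. -/
def chainRel {G : Type} [Group G] (t t' : FDRep ℂ G) : Prop :=
  ∃ l : List (FDRep ℂ G), l ≠ [] ∧ (∀ τ ∈ l, Simple τ) ∧
    occursIn t (tensorList l) ∧ occursIn t' (tensorList l)

/-!
Everything happens in the braided right-rigid category `FDRep ℂ G`. A nonzero map out of a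
simple object is a monomorphism, and `X ⊗ -` preserves monomorphisms because it is right adjoint
to `Xᘁ ⊗ -`; hence if `p` occurs in `t ⊗ s`, `t` in `L` and `s` in `M`, then `p` occurs in
`L ⊗ M`. For transitivity, if `y` occurs in both `L` and `M` then `𝟙 ⊆ y ⊗ yᘁ ⊆ L ⊗ yᘁ`, and
likewise for `M`, so `x ⊆ L ⊗ 𝟙 ⊆ L ⊗ yᘁ ⊗ M ⊇ 𝟙 ⊗ M ⊇ z`. The dual `yᘁ` is again simple since
`End yᘁ ≃ End y` and, `G` being finite, simplicity means `dim End = 1`. Inverses come from the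
coevaluation `𝟙 ⟶ t ⊗ tᘁ`, which is nonzero by the zigzag identity.
-/

universe u

open Limits

namespace CategoryTheory

variable {C : Type*} [Category C] [MonoidalCategory C]

instance mono_whiskerLeft_of_hasRightDual (X : C) [HasRightDual X] {Y Z : C} (f : Y ⟶ Z)
    [Mono f] : Mono (X ◁ f) :=
  (Functor.preservesMonomorphisms_of_adjunction (tensorLeftAdjunction X Xᘁ)).preserves f

instance mono_whiskerRight_of_hasRightDual [BraidedCategory C] (X : C) [HasRightDual X]
    {Y Z : C} (f : Y ⟶ Z) [Mono f] : Mono (f ▷ X) :=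
  mono_of_mono_fac (BraidedCategory.braiding_naturality_left f X)

theorem coevaluation_ne_zero [Preadditive C] [MonoidalPreadditive C] {X Y : C} [ExactPairing X Y]
    (hX : 𝟙 X ≠ 0) : η_ X Y ≠ 0 := by
  intro hη
  have zigzag := ExactPairing.evaluation_coevaluation (X := X) (Y := Y)
  simp only [hη, MonoidalPreadditive.zero_whiskerRight, zero_comp] at zigzag
  exact hX (by simpa using (λ_ X).inv ≫= zigzag.symm =≫ (ρ_ X).hom)

section Linear

variable (R : Type*) [Semiring R] [Preadditive C] [Linear R C] [MonoidalPreadditive C]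
  [MonoidalLinear R C]

def tensorLeftHomLinearEquiv (X Y Y' Z : C) [ExactPairing Y Y'] :
    (Y' ⊗ X ⟶ Z) ≃ₗ[R] (X ⟶ Y ⊗ Z) :=
  { tensorLeftHomEquiv X Y Y' Z with
    map_add' := by simp [tensorLeftHomEquiv]
    map_smul' := by simp [tensorLeftHomEquiv] }

def tensorRightHomLinearEquiv (X Y Y' Z : C) [ExactPairing Y Y'] :
    (X ⊗ Y ⟶ Z) ≃ₗ[R] (X ⟶ Z ⊗ Y') :=
  { tensorRightHomEquiv X Y Y' Z with
    map_add' := by simp [tensorRightHomEquiv]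
    map_smul' := by simp [tensorRightHomEquiv] }

def endRightDualLinearEquiv (X : C) [HasRightDual X] : (Xᘁ ⟶ Xᘁ) ≃ₗ[R] (X ⟶ X) :=
  Linear.homCongr R (Iso.refl _) (λ_ _).symm ≪≫ₗ
    (tensorRightHomLinearEquiv R Xᘁ X Xᘁ (𝟙_ C)).symm ≪≫ₗ
    tensorLeftHomLinearEquiv R X X Xᘁ (𝟙_ C) ≪≫ₗ
    Linear.homCongr R (Iso.refl _) (ρ_ _)

end Linear

end CategoryTheory

namespace FDRep

variable {k G : Type u} [Field k] [Group G]

theorem char_tensorUnit (g : G) : (𝟙_ (FDRep k G)).character g = 1 := by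
  have : (𝟙_ (FDRep k G)).ρ g = LinearMap.id := rfl
  rw [FDRep.character, this, LinearMap.trace_id]
  exact congrArg Nat.cast (Module.finrank_self k) |>.trans Nat.cast_one

instance simple_tensorUnit [IsAlgClosed k] [CharZero k] [Finite G] : Simple (𝟙_ (FDRep k G)) := by
  have := Fintype.ofFinite G
  simp [simple_iff_char_is_norm_one, char_tensorUnit]

instance simple_rightDual [IsAlgClosed k] [Finite G] [NeZero (Nat.card G : k)] (X : FDRep k G)
    [Simple X] : Simple Xᘁ := by
  rw [simple_iff_end_is_rank_one, (endRightDualLinearEquiv k X).finrank_eq,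
    ← simple_iff_end_is_rank_one]
  infer_instance

end FDRep

section ChainGroup

variable {G : Type} [Group G]

theorem occursIn.comp_mono {t π π' : FDRep ℂ G} (h : occursIn t π) (i : π ⟶ π') [Mono i] :
    occursIn t π' :=
  let ⟨f, hf⟩ := h
  ⟨f ≫ i, fun hfi => hf (zero_of_comp_mono i hfi)⟩

theorem occursIn.comp_iso {t π π' : FDRep ℂ G} (h : occursIn t π) (e : π ≅ π') :
    occursIn t π' :=
  h.comp_mono e.hom

theorem occursIn.exists_mono {t π : FDRep ℂ G} [Simple t] (h : occursIn t π) :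
    ∃ f : t ⟶ π, Mono f :=
  let ⟨f, hf⟩ := h
  ⟨f, mono_of_nonzero_from_simple hf⟩

theorem occursIn_tensorList_singleton (t : FDRep ℂ G) [Simple t] :
    occursIn t (tensorList [t]) :=
  occursIn.comp_iso ⟨𝟙 t, id_nonzero t⟩ (ρ_ t).symm

noncomputable def tensorListAppendIso :
    (l m : List (FDRep ℂ G)) → tensorList (l ++ m) ≅ tensorList l ⊗ tensorList m
  | [], m => (λ_ (tensorList m)).symm
  | a :: l, m => whiskerLeftIso a (tensorListAppendIso l m) ≪≫ (α_ _ _ _).symm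

theorem occursIn_tensorList_append {p t s : FDRep ℂ G} [Simple t] [Simple s]
    {l m : List (FDRep ℂ G)} (hp : occursIn p (t ⊗ s)) (ht : occursIn t (tensorList l))
    (hs : occursIn s (tensorList m)) : occursIn p (tensorList (l ++ m)) := by
  obtain ⟨f, _⟩ := ht.exists_mono
  obtain ⟨g, _⟩ := hs.exists_mono
  exact (hp.comp_mono (f ▷ s ≫ tensorList l ◁ g)).comp_iso (tensorListAppendIso l m).symm

theorem chainRel_self (t : FDRep ℂ G) [Simple t] : chainRel t t :=
  ⟨[t], by simp, by simpa, occursIn_tensorList_singleton t, occursIn_tensorList_singleton t⟩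

theorem chainRel.symm {t t' : FDRep ℂ G} (h : chainRel t t') : chainRel t' t :=
  let ⟨l, hl, hls, ht, ht'⟩ := h
  ⟨l, hl, hls, ht', ht⟩

theorem chainRel_of_occursIn_tensor {t t₁ s s₁ p q : FDRep ℂ G} [Simple t] [Simple t₁]
    [Simple s] [Simple s₁] (ht : chainRel t t₁) (hs : chainRel s s₁)
    (hp : occursIn p (t ⊗ s)) (hq : occursIn q (t₁ ⊗ s₁)) : chainRel p q := by
  obtain ⟨l, hl, hls, ht, ht₁⟩ := ht
  obtain ⟨m, -, hms, hs, hs₁⟩ := hs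
  refine ⟨l ++ m, by simp [hl], ?_, occursIn_tensorList_append hp ht hs,
    occursIn_tensorList_append hq ht₁ hs₁⟩
  simpa [or_imp, forall_and] using ⟨hls, hms⟩

theorem chainRel_of_occursIn_tensor_unit {t p : FDRep ℂ G} [Simple t]
    (hp : occursIn p (t ⊗ 𝟙_ (FDRep ℂ G))) : chainRel p t :=
  ⟨[t], by simp, by simpa, hp, occursIn_tensorList_singleton t⟩

variable [Finite G]

theorem exists_mono_unit_tensor_rightDual {y L : FDRep ℂ G} [Simple y] (h : occursIn y L) :
    ∃ u : 𝟙_ (FDRep ℂ G) ⟶ L ⊗ yᘁ, Mono u := by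
  obtain ⟨a, _⟩ := h.exists_mono
  have : Mono (η_ y yᘁ) := mono_of_nonzero_from_simple (coevaluation_ne_zero (id_nonzero y))
  exact ⟨η_ y yᘁ ≫ a ▷ yᘁ, inferInstance⟩

theorem chainRel_trans {x y z : FDRep ℂ G} [Simple y] (hxy : chainRel x y)
    (hyz : chainRel y z) : chainRel x z := by
  obtain ⟨l, hl, hls, hx, hy⟩ := hxy
  obtain ⟨m, -, hms, hy', hz⟩ := hyz
  obtain ⟨u, _⟩ := exists_mono_unit_tensor_rightDual hy
  obtain ⟨v, _⟩ := exists_mono_unit_tensor_rightDual hy'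
  refine ⟨l ++ yᘁ :: m, by simp, ?_, ?_, ?_⟩
  · simp only [List.mem_append, List.mem_cons]
    rintro τ (hτ | rfl | hτ)
    exacts [hls τ hτ, inferInstance, hms τ hτ]
  · exact (hx.comp_mono ((ρ_ _).inv ≫ _ ◁ (v ≫ (β_ _ _).hom))).comp_iso
      (tensorListAppendIso l (yᘁ :: m)).symm
  · exact (hz.comp_mono ((λ_ _).inv ≫ u ▷ _ ≫ (α_ _ _ _).hom)).comp_iso
      (tensorListAppendIso l (yᘁ :: m)).symm

end ChainGroup

/-- for a finite group `G`, the chain relation `∼` on irreducible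
representations is an equivalence relation, the tensor product descends to a
well-defined operation on equivalence classes (the chain group), the class of the
trivial representation is an identity, and inverses exist (via the contragredient);
so the classes form a group. -/
theorem stmt17 {G : Type} [Group G] [Finite G] :
    Equivalence (fun t t' : {V : FDRep ℂ G // Simple V} => chainRel t.1 t'.1) ∧
    (∀ t t₁ s s₁ : FDRep ℂ G, Simple t → Simple t₁ → Simple s → Simple s₁ →
      chainRel t t₁ → chainRel s s₁ →
      ∀ p q : FDRep ℂ G, Simple p → Simple q →
        occursIn p (t ⊗ s) → occursIn q (t₁ ⊗ s₁) → chainRel p q) ∧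
    (∀ t : FDRep ℂ G, Simple t → ∀ p : FDRep ℂ G, Simple p →
      occursIn p (t ⊗ 𝟙_ (FDRep ℂ G)) → chainRel p t) ∧
    (∀ t : FDRep ℂ G, Simple t →
      ∃ t' : FDRep ℂ G, Simple t' ∧ occursIn (𝟙_ (FDRep ℂ G)) (t ⊗ t')) := by
  refine ⟨⟨fun t => have := t.2; chainRel_self t.1, chainRel.symm,
    fun {_ y _} hxy hyz => have := y.2; chainRel_trans hxy hyz⟩, ?_, ?_, ?_⟩
  · intro t t₁ s s₁ _ _ _ _ ht hs p q _ _ hp hq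
    exact chainRel_of_occursIn_tensor ht hs hp hq
  · intro t _ p _ hp
    exact chainRel_of_occursIn_tensor_unit hp
  · intro t _
    exact ⟨tᘁ, inferInstance, η_ t tᘁ, coevaluation_ne_zero (id_nonzero t)⟩
end
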